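/- Let q ∈ [0,1), let P(λ,ζ) be a complex polynomial of degree p ≥ 1 in λ, let D ⊂ ℂ be a disc centred at 0, let φ₀,…,φ_{p−1} be holomorphic on D, and let (uₙ)_{n≥0} be holomorphic functions on D. Then: (1) û(t,z) = Σ (uₙ(z)/[n]_q!)tⁿ is a formal power series solution of the Cauchy problem P(D_{q,t},∂_z)u = 0, D^j_{q,t}u(0,z) = φ_j(z) for j = 0,…,p−1, if and only if v̂(t,z) = Σ uₙ(z)tⁿ is a formal power series solution of P(∂_{𝟏,t},∂_z)v = 0, ∂ʲ_{𝟏,t}v(0,z) = φ_j(z) for j = 0,…,p−1; and (2) for every k > 0 and d ∈ ℝ, û is k-summable in direction d if and only if v̂ is k-summable in direction d. -/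

import Mathlib

open scoped Real

noncomputable section

/-- The open sector in direction `d` with opening `α` in `ℂ \ {0}`. -/
def Sector (d α : ℝ) : Set ℂ :=
  {z : ℂ | z ≠ 0 ∧ ∃ φ : ℝ, |φ - d| < α / 2 ∧
    z = ((‖z‖ : ℝ) : ℂ) * Complex.exp (φ * Complex.I)}

/-- The disc-sector `S_d(α) ∪ D_r`. -/
def DiscSector (d α r : ℝ) : Set ℂ := Sector d α ∪ Metric.ball 0 r

variable {E : Type*} [NormedAddCommGroup E] [NormedSpace ℂ E]

/-- `f` has exponential growth of order at most `k` on the disc-sector `S_d(α) ∪ D_r`. -/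
def ExpGrowthOn (k d α r : ℝ) (f : ℂ → E) : Prop :=
  ∀ α' ∈ Set.Ioo (0 : ℝ) α, ∀ r' ∈ Set.Ioo (0 : ℝ) r, ∃ A B : ℝ, 0 < A ∧ 0 < B ∧
    ∀ x ∈ DiscSector d α' r', ‖f x‖ ≤ A * Real.exp (B * ‖x‖ ^ k)

/-- The power series with coefficients `c` has positive radius of convergence and its sum
near `0` extends to a holomorphic function on the disc-sector `S_d(α) ∪ D_r` of exponential
growth of order at most `k`. -/
def ExtendsOn (k d α r : ℝ) (c : ℕ → E) : Prop :=
  ∃ f : ℂ → E, DifferentiableOn ℂ f (DiscSector d α r) ∧ ExpGrowthOn k d α r f ∧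
    ∃ ρ : ℝ, 0 < ρ ∧ ρ ≤ r ∧ ∀ t ∈ Metric.ball (0 : ℂ) ρ,
      HasSum (fun n : ℕ => t ^ n • c n) (f t)

/-- The power series with coefficients `c` has positive radius of convergence and its sum
near `0` extends to a holomorphic function of exponential growth of order at most `k`
on some disc-sector in direction `d`. -/
def ExtendsToSector (k d : ℝ) (c : ℕ → E) : Prop :=
  ∃ α r : ℝ, 0 < α ∧ α < 2 * π ∧ 0 < r ∧ ExtendsOn k d α r c

/-- The formal power series `Σ aₙ tⁿ` is `k`-summable in direction `d`. -/
def KSummable (k d : ℝ) (a : ℕ → E) : Prop :=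
  ExtendsToSector k d (fun n => ((Real.Gamma (1 + (n : ℝ) / k) : ℂ))⁻¹ • a n)

/-- The formal power series `Σ aₙ tⁿ` has Gevrey order `s`. -/
def GevreyOrder (s : ℝ) (a : ℕ → E) : Prop :=
  ∃ B C : ℝ, 0 < B ∧ 0 < C ∧ ∀ n : ℕ, ‖a n‖ ≤ B * C ^ n * (n.factorial : ℝ) ^ s

/-- The sequence `m` preserves Gevrey order. -/
def PreservesGevreyOrder (m : ℕ → ℝ) : Prop :=
  ∀ s : ℝ, ∀ (E : Type) [NormedAddCommGroup E] [NormedSpace ℂ E] [CompleteSpace E],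
    ∀ a : ℕ → E, GevreyOrder s a ↔ GevreyOrder s (fun n => ((m n : ℂ))⁻¹ • a n)

/-- The sequence `m` preserves summability. -/
def PreservesSummability (m : ℕ → ℝ) : Prop :=
  ∀ k d : ℝ, 0 < k → ∀ (E : Type) [NormedAddCommGroup E] [NormedSpace ℂ E] [CompleteSpace E],
    ∀ a : ℕ → E, KSummable k d a ↔ KSummable k d (fun n => ((m n : ℂ))⁻¹ • a n)


/-- The `q`-analogue `[n]_q = 1 + q + ⋯ + q^(n-1)` of `n`. -/
def qNat (q : ℝ) (n : ℕ) : ℝ := ∑ i ∈ Finset.range n, q ^ i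

/-- The `q`-factorial `[n]_q! = [1]_q ⋯ [n]_q`. -/
def qFactorial (q : ℝ) : ℕ → ℝ
  | 0 => 1
  | n + 1 => qFactorial q n * qNat q (n + 1)

/-- The moment differentiation `∂_{m,t}` acting on the family of coefficient functions of a
series `Σ wₙ(z) tⁿ ∈ O(D)[[t]]`. -/
def Tmom (m : ℕ → ℝ) (w : ℕ → ℂ → ℂ) : ℕ → ℂ → ℂ :=
  fun n z => ((m (n + 1) / m n : ℝ) : ℂ) * w (n + 1) z

/-- The complex derivative `∂_z` applied coefficientwise to `Σ wₙ(z) tⁿ`. -/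
def Zder (w : ℕ → ℂ → ℂ) : ℕ → ℂ → ℂ := fun n z => deriv (w n) z

/-- The action of `P(∂_{m,t}, ∂_z)` on `Σ wₙ(z)tⁿ`, where `P(λ,ζ) = Σ_{i,j} c_{ij} λ^i ζ^j`
is encoded as a polynomial in `λ` (outer variable) with coefficients polynomials in `ζ`. -/
def PApply (m : ℕ → ℝ) (P : Polynomial (Polynomial ℂ)) (w : ℕ → ℂ → ℂ) : ℕ → ℂ → ℂ :=
  fun n z => ∑ i ∈ Finset.range (P.natDegree + 1),
    ∑ j ∈ Finset.range ((P.coeff i).natDegree + 1),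
      (P.coeff i).coeff j * ((Tmom m)^[i] (Zder^[j] w)) n z

/-- `w` (the coefficients of `û = Σ wₙ(z)tⁿ`) is a formal power series solution of the Cauchy
problem `P(∂_{m,t},∂_z)u = 0`, `∂ʲ_{m,t}u(0,z) = φ_j(z)` (`j = 0,…,p-1`) on the disc `D_R`. -/
def IsCauchySol (m : ℕ → ℝ) (P : Polynomial (Polynomial ℂ)) (R : ℝ) (p : ℕ)
    (φ : ℕ → ℂ → ℂ) (w : ℕ → ℂ → ℂ) : Prop :=
  (∀ n, ∀ z ∈ Metric.ball (0 : ℂ) R, PApply m P w n z = 0) ∧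
  (∀ j < p, ∀ z ∈ Metric.ball (0 : ℂ) R, ((Tmom m)^[j] w) 0 z = φ j z)

instance (ρ : ℝ) : CompactSpace (Metric.closedBall (0 : ℂ) ρ) :=
  isCompact_iff_compactSpace.mp (isCompact_closedBall (0 : ℂ) ρ)

/-- The Banach space `E_ρ` of functions holomorphic on the disc `D_ρ` and continuous on its
closure, with the sup norm: realised as a submodule of `C(closedBall 0 ρ, ℂ)`. -/
def HolDisc (ρ : ℝ) : Submodule ℂ C(Metric.closedBall (0 : ℂ) ρ, ℂ) where
  carrier := {f | ∃ g : ℂ → ℂ, DifferentiableOn ℂ g (Metric.ball 0 ρ) ∧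
    ∀ z : Metric.closedBall (0 : ℂ) ρ, (z : ℂ) ∈ Metric.ball (0 : ℂ) ρ → g z = f z}
  add_mem' := by
    rintro f g ⟨F, hF, hFf⟩ ⟨G, hG, hGg⟩
    exact ⟨F + G, hF.add hG, fun z hz => by
      simp [Pi.add_apply, hFf z hz, hGg z hz]⟩
  zero_mem' := ⟨0, differentiableOn_const 0, fun z _ => rfl⟩
  smul_mem' := by
    rintro c f ⟨F, hF, hFf⟩
    exact ⟨c • F, hF.const_smul c, fun z hz => by
      simp [Pi.smul_apply, hFf z hz]⟩

/-- A series `Σ wₙ(z)tⁿ ∈ O(D_R)[[t]]` is `k`-summable in direction `d`: for some closed disc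
of positive radius `ρ` contained in `D_R`, the series with coefficients in the Banach space
`E_ρ` is `k`-summable in direction `d`. -/
def KSummableO (k d R : ℝ) (w : ℕ → ℂ → ℂ) : Prop :=
  ∃ ρ : ℝ, 0 < ρ ∧ Metric.closedBall (0 : ℂ) ρ ⊆ Metric.ball 0 R ∧
    ∃ c : ℕ → HolDisc ρ,
      (∀ n, ∀ z : Metric.closedBall (0 : ℂ) ρ,
        ((c n : C(Metric.closedBall (0 : ℂ) ρ, ℂ)) z) = w n z) ∧
      KSummable k d c



section Aux

namespace QAux

variable {q : ℝ}

/-- `(q;q)_l = ∏_{i=1}^l (1 - q^i)`. -/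
def qpoch (q : ℝ) (l : ℕ) : ℝ := ∏ i ∈ Finset.range l, (1 - q ^ (i + 1))

lemma pow_lt_one' (hq0 : 0 ≤ q) (hq1 : q < 1) {m : ℕ} (hm : 1 ≤ m) : q ^ m < 1 :=
  pow_lt_one₀ hq0 hq1 (by omega)

lemma qpoch_succ (l : ℕ) : qpoch q (l + 1) = qpoch q l * (1 - q ^ (l + 1)) :=
  Finset.prod_range_succ _ _

lemma qpoch_pos (hq0 : 0 ≤ q) (hq1 : q < 1) (l : ℕ) : 0 < qpoch q l := by
  induction l with
  | zero => simp [qpoch]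
  | succ n ih =>
      rw [qpoch_succ]
      have := pow_lt_one' hq0 hq1 (m := n + 1) (by omega)
      nlinarith

lemma qNat_eq (hq1 : q < 1) (n : ℕ) : qNat q n = (1 - q ^ n) / (1 - q) := by
  have hne : q ≠ 1 := ne_of_lt hq1
  have h1 : q - 1 ≠ 0 := sub_ne_zero.mpr hne
  have h2 : (1:ℝ) - q ≠ 0 := by intro h; apply h1; linarith [h]
  rw [qNat, geom_sum_eq hne]
  rw [div_eq_div_iff h1 h2]
  ring

lemma qFactorial_eq (hq1 : q < 1) (n : ℕ) :
    qFactorial q n = qpoch q n / (1 - q) ^ n := by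
  induction n with
  | zero => simp [qFactorial, qpoch]
  | succ n ih =>
      have h1q : (1 : ℝ) - q ≠ 0 := by intro h; nlinarith [h]
      have h2 : (1:ℝ) - q ≠ 0 := by intro h; nlinarith [h]
      rw [qFactorial, ih, qNat_eq hq1, qpoch_succ, pow_succ, div_mul_div_comm, pow_succ]

lemma qFactorial_pos (hq0 : 0 ≤ q) (hq1 : q < 1) (n : ℕ) : 0 < qFactorial q n := by
  rw [qFactorial_eq hq1]
  exact div_pos (qpoch_pos hq0 hq1 n) (pow_pos (by linarith) n)

/-- basic summability: `∑ x^l / (q;q)_l` converges for `0 ≤ x < 1`. -/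
lemma sumLem (hq0 : 0 ≤ q) (hq1 : q < 1) {x : ℝ} (hx0 : 0 ≤ x) (hx1 : x < 1) :
    Summable (fun l => x ^ l / qpoch q l) := by
  rcases eq_or_lt_of_le hx0 with h0 | hxpos
  · apply summable_of_ne_finset_zero (s := {0})
    intro l hl
    simp only [Finset.mem_singleton] at hl
    rw [← h0, zero_pow hl, zero_div]
  · apply summable_of_ratio_norm_eventually_le (r := (1 + x) / 2) (by linarith)
    have hq : Filter.Tendsto (fun l : ℕ => q ^ (l + 1)) Filter.atTop (nhds 0) := by
      exact (tendsto_pow_atTop_nhds_zero_of_lt_one hq0 hq1).comp (Filter.tendsto_add_atTop_nat 1)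
    have hev : ∀ᶠ l : ℕ in Filter.atTop, q ^ (l + 1) < (1 - x) / (1 + x) := by
      have hpos : (0:ℝ) < (1 - x) / (1 + x) := by
        apply div_pos <;> linarith
      exact hq.eventually_lt_const hpos
    filter_upwards [hev] with l hl
    have hp1 : 0 < qpoch q l := qpoch_pos hq0 hq1 l
    have hp2 : 0 < qpoch q (l + 1) := qpoch_pos hq0 hq1 (l + 1)
    have hql : q ^ (l+1) < 1 := pow_lt_one' hq0 hq1 (by omega)
    have hqlpos : (0:ℝ) < 1 - q ^ (l+1) := by linarith
    rw [Real.norm_eq_abs, Real.norm_eq_abs, abs_of_pos (by positivity), abs_of_pos (by positivity)]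
    have e : x ^ (l+1) / qpoch q (l+1) = (x / (1 - q ^ (l+1))) * (x ^ l / qpoch q l) := by
      rw [qpoch_succ, pow_succ]
      field_simp
    rw [e]
    have key : x / (1 - q ^ (l+1)) ≤ (1 + x) / 2 := by
      rw [div_le_div_iff₀ hqlpos two_pos]
      have h1x : (0:ℝ) < 1 + x := by linarith
      rw [lt_div_iff₀ h1x] at hl  -- hl : q^(l+1) * (1+x) < 1 - x
      nlinarith
    exact mul_le_mul_of_nonneg_right key (by positivity)

/-- `Ã(x) = Σ x^l/(q;q)_l`. -/
def Atil (q x : ℝ) : ℝ := ∑' l : ℕ, x ^ l / qpoch q l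

/-- `Ê(x) = Σ (-1)^l q^(C(l,2)) x^l/(q;q)_l`. -/
def eterm (q x : ℝ) (l : ℕ) : ℝ := (-1) ^ l * q ^ l.choose 2 * x ^ l / qpoch q l

def Etil (q x : ℝ) : ℝ := ∑' l : ℕ, eterm q x l

variable (hq0 : 0 ≤ q) (hq1 : q < 1)
include hq0 hq1

lemma sumLemE {x : ℝ} (hx0 : 0 ≤ x) (hx1 : x < 1) : Summable (eterm q x) := by
  apply Summable.of_norm
  apply Summable.of_nonneg_of_le (fun l => norm_nonneg _) _ (sumLem hq0 hq1 hx0 hx1)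
  intro l
  rw [Real.norm_eq_abs, eterm, abs_div, abs_of_pos (qpoch_pos hq0 hq1 l)]
  have he : |(-1:ℝ)^l * q ^ l.choose 2 * x ^ l| = q ^ l.choose 2 * x ^ l := by
    rw [abs_mul, abs_mul, abs_pow, abs_neg, abs_one, one_pow, one_mul,
      abs_of_nonneg (pow_nonneg hq0 _), abs_of_nonneg (pow_nonneg hx0 _)]
  rw [he]
  gcongr
  · exact (qpoch_pos hq0 hq1 l).le
  · have h1 := pow_le_one₀ hq0 hq1.le (n := l.choose 2)
    nlinarith [pow_nonneg hx0 l]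

lemma hasSum_Atil {x : ℝ} (hx0 : 0 ≤ x) (hx1 : x < 1) :
    HasSum (fun l => x ^ l / qpoch q l) (Atil q x) := (sumLem hq0 hq1 hx0 hx1).hasSum

lemma hasSum_Etil {x : ℝ} (hx0 : 0 ≤ x) (hx1 : x < 1) :
    HasSum (eterm q x) (Etil q x) := (sumLemE hq0 hq1 hx0 hx1).hasSum

lemma FE_A {x : ℝ} (hx0 : 0 ≤ x) (hx1 : x < 1) :
    Atil q (q * x) = (1 - x) * Atil q x := by
  have hqx0 : 0 ≤ q * x := mul_nonneg hq0 hx0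
  have hqx1 : q * x < 1 := by nlinarith
  have hA := hasSum_Atil hq0 hq1 hx0 hx1
  have hAq := hasSum_Atil hq0 hq1 hqx0 hqx1
  have hdiff := hA.sub hAq
  -- terms: x^l (1 - q^l)/qpoch l
  have hd : (fun l => x ^ l / qpoch q l - (q*x) ^ l / qpoch q l)
      = fun l => x ^ l * (1 - q ^ l) / qpoch q l := by
    funext l
    rw [mul_pow, div_sub_div_same]
    ring
  rw [hd] at hdiff
  -- shift by one
  have hshift := (hasSum_nat_add_iff' 1).mpr hdiff
  simp only [Finset.range_one, Finset.sum_singleton] at hshift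
  have h0 : x ^ 0 * (1 - q ^ 0) / qpoch q 0 = 0 := by simp
  rw [h0, sub_zero] at hshift
  have hd2 : (fun l => x ^ (l+1) * (1 - q ^ (l+1)) / qpoch q (l+1))
      = fun l => x * (x ^ l / qpoch q l) := by
    funext l
    have h1 : (1:ℝ) - q ^ (l+1) ≠ 0 := by
      have := pow_lt_one' hq0 hq1 (m := l+1) (by omega); intro h; nlinarith [h]
    have h2 := (qpoch_pos hq0 hq1 l).ne'
    rw [qpoch_succ, pow_succ]
    field_simp
  rw [hd2] at hshift
  have hx := hA.mul_left x
  have := hshift.unique hx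
  linarith [this]

lemma FE_E {x : ℝ} (hx0 : 0 ≤ x) (hx1 : x < 1) :
    Etil q x = (1 - x) * Etil q (q * x) := by
  have hqx0 : 0 ≤ q * x := mul_nonneg hq0 hx0
  have hqx1 : q * x < 1 := by nlinarith
  have hE := hasSum_Etil hq0 hq1 hx0 hx1
  have hEq := hasSum_Etil hq0 hq1 hqx0 hqx1
  have hdiff := hE.sub hEq
  have hd : (fun l => eterm q x l - eterm q (q*x) l)
      = fun l => (-1)^l * q ^ l.choose 2 * (x ^ l * (1 - q ^ l)) / qpoch q l := by
    funext l
    rw [eterm, eterm, mul_pow, div_sub_div_same]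
    ring
  rw [hd] at hdiff
  have hshift := (hasSum_nat_add_iff' 1).mpr hdiff
  simp only [Finset.range_one, Finset.sum_singleton] at hshift
  have h0 : (-1:ℝ)^0 * q ^ Nat.choose 0 2 * (x ^ 0 * (1 - q ^ 0)) / qpoch q 0 = 0 := by simp
  rw [h0, sub_zero] at hshift
  have hd2 : (fun l => (-1:ℝ)^(l+1) * q ^ (l+1).choose 2 * (x ^ (l+1) * (1 - q ^ (l+1))) / qpoch q (l+1))
      = fun l => (-x) * eterm q (q*x) l := by
    funext l
    have h1 : (1:ℝ) - q ^ (l+1) ≠ 0 := by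
      have := pow_lt_one' hq0 hq1 (m := l+1) (by omega); intro h; nlinarith [h]
    have h2 := (qpoch_pos hq0 hq1 l).ne'
    have hch : (l+1).choose 2 = l.choose 2 + l := by
      rw [Nat.choose_succ_succ]
      simp [Nat.choose_one_right, Nat.add_comm]
    rw [eterm, qpoch_succ, hch, pow_add, pow_succ, pow_succ, mul_pow]
    field_simp
    ring
  rw [hd2] at hshift
  have hx := hEq.mul_left (-x)
  have := hshift.unique hx
  linarith [this]

lemma qpow_lt_one (n : ℕ) : q ^ (n+1) < 1 := pow_lt_one' hq0 hq1 (by omega)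

lemma qpow_nonneg (n : ℕ) : 0 ≤ q ^ (n+1) := pow_nonneg hq0 _

lemma IA (n : ℕ) : Atil q (q ^ (n+1)) = qpoch q n * Atil q q := by
  induction n with
  | zero => simp [qpoch, pow_one]
  | succ n ih =>
      have : q ^ (n+1+1) = q * q ^ (n+1) := by ring
      rw [this, FE_A hq0 hq1 (qpow_nonneg hq0 hq1 n) (qpow_lt_one hq0 hq1 n), ih, qpoch_succ]
      ring

lemma IE (n : ℕ) : Etil q q = qpoch q n * Etil q (q ^ (n+1)) := by
  induction n with
  | zero => simp [qpoch, pow_one]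
  | succ n ih =>
      have h : q ^ (n+1+1) = q * q ^ (n+1) := by ring
      have := FE_E hq0 hq1 (qpow_nonneg hq0 hq1 n) (qpow_lt_one hq0 hq1 n)
      rw [← h] at this
      rw [ih, this, qpoch_succ]
      ring

lemma Atil_ge_one : 1 ≤ Atil q q := by
  have hs := sumLem hq0 hq1 hq0 hq1
  have := hs.le_tsum 0 (fun l _ => div_nonneg (pow_nonneg hq0 l) (qpoch_pos hq0 hq1 l).le)
  simpa [qpoch, Atil] using this

lemma qpoch_le_one (l : ℕ) : qpoch q l ≤ 1 := by
  induction l with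
  | zero => simp [qpoch]
  | succ n ih =>
      rw [qpoch_succ]
      have h1 : 0 < qpoch q n := qpoch_pos hq0 hq1 n
      have h2 : q ^ (n+1) < 1 := pow_lt_one' hq0 hq1 (by omega)
      have h3 : 0 ≤ q ^ (n+1) := pow_nonneg hq0 _
      nlinarith

/-- the majorant constant `M`. -/
def Mconst (q : ℝ) : ℝ := ∑' m : ℕ, q ^ (m+1).choose 2 * q ^ m / qpoch q (m+1)

lemma Mconst_summable : Summable (fun m : ℕ => q ^ (m+1).choose 2 * q ^ m / qpoch q (m+1)) := by
  apply Summable.of_nonneg_of_le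
    (fun m => div_nonneg (mul_nonneg (pow_nonneg hq0 _) (pow_nonneg hq0 _)) (qpoch_pos hq0 hq1 _).le)
    _ ((sumLem hq0 hq1 hq0 hq1).mul_left (1/(1-q)))
  intro m
  have h1 : 0 < qpoch q m := qpoch_pos hq0 hq1 m
  have h2 : 0 < qpoch q (m+1) := qpoch_pos hq0 hq1 (m+1)
  have h1q : (0:ℝ) < 1 - q := by linarith
  have hle : (1 - q) * qpoch q m ≤ qpoch q (m+1) := by
    rw [qpoch_succ]
    have h2' : q ^ (m+1) ≤ q := by
      calc q ^ (m+1) ≤ q ^ 1 := pow_le_pow_of_le_one hq0 hq1.le (by omega)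
      _ = q := pow_one q
    nlinarith
  have hnum : q ^ (m+1).choose 2 * q ^ m ≤ q ^ m := by
    have := pow_le_one₀ hq0 hq1.le (n := (m+1).choose 2)
    nlinarith [pow_nonneg hq0 m]
  calc q ^ (m+1).choose 2 * q ^ m / qpoch q (m+1) ≤ q ^ m / ((1-q) * qpoch q m) :=
        div_le_div₀ (pow_nonneg hq0 m) hnum (by positivity) hle
  _ = 1/(1-q) * (q ^ m / qpoch q m) := by field_simp

lemma Mconst_nonneg : 0 ≤ Mconst q :=
  tsum_nonneg fun m => div_nonneg (mul_nonneg (pow_nonneg hq0 _) (pow_nonneg hq0 _)) (qpoch_pos hq0 hq1 _).le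

lemma Etil_lower {y : ℝ} (hy0 : 0 ≤ y) (hyq : y ≤ q) : 1 - y * Mconst q ≤ Etil q y := by
  have hy1 : y < 1 := lt_of_le_of_lt hyq hq1
  have hE := hasSum_Etil hq0 hq1 hy0 hy1
  have hshift := (hasSum_nat_add_iff' 1).mpr hE
  simp only [Finset.range_one, Finset.sum_singleton] at hshift
  have h0 : eterm q y 0 = 1 := by simp [eterm, qpoch]
  rw [h0] at hshift
  -- |Etil q y - 1| ≤ y * M
  have habs : |Etil q y - 1| ≤ y * Mconst q := by
    have h1 : |Etil q y - 1| ≤ ∑' m : ℕ, |eterm q y (m+1)| := by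
      rw [← hshift.tsum_eq, ← Real.norm_eq_abs]
      simpa [Real.norm_eq_abs] using norm_tsum_le_tsum_norm
        (by simpa [Real.norm_eq_abs] using hshift.summable.abs :
          Summable fun m => ‖eterm q y (m+1)‖)
    refine h1.trans ?_
    rw [Mconst, ← Summable.tsum_mul_left y (Mconst_summable hq0 hq1)]
    apply Summable.tsum_le_tsum _ (hshift.summable.abs) ((Mconst_summable hq0 hq1).mul_left y)
    intro m
    rw [eterm, abs_div, abs_of_pos (qpoch_pos hq0 hq1 (m+1)), abs_mul, abs_mul, abs_pow,
      abs_neg, abs_one, one_pow, one_mul, abs_of_nonneg (pow_nonneg hq0 _),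
      abs_of_nonneg (pow_nonneg hy0 _)]
    have hyq' : y ^ (m+1) ≤ y * q ^ m := by
      rw [pow_succ']
      exact mul_le_mul_of_nonneg_left (pow_le_pow_left₀ hy0 hyq m) hy0
    calc q ^ (m+1).choose 2 * y ^ (m+1) / qpoch q (m+1)
        ≤ q ^ (m+1).choose 2 * (y * q ^ m) / qpoch q (m+1) := by
          gcongr
          exact (qpoch_pos hq0 hq1 _).le
    _ = y * (q ^ (m+1).choose 2 * q ^ m / qpoch q (m+1)) := by ring
  have := abs_le.mp habs
  linarith [this.1]

lemma Etil_pos : 0 < Etil q q := by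
  obtain ⟨N, hN⟩ : ∃ N : ℕ, q ^ (N+1) < 1 / (Mconst q + 1) := by
    have h := (tendsto_pow_atTop_nhds_zero_of_lt_one hq0 hq1).comp (Filter.tendsto_add_atTop_nat 1)
    have hpos : (0:ℝ) < 1 / (Mconst q + 1) := by
      have := Mconst_nonneg hq0 hq1; positivity
    exact (h.eventually_lt_const hpos).exists
  have hM := Mconst_nonneg hq0 hq1
  have hy0 : 0 ≤ q ^ (N+1) := pow_nonneg hq0 _
  have hyq : q ^ (N+1) ≤ q := by
    calc q ^ (N+1) ≤ q ^ 1 := pow_le_pow_of_le_one hq0 hq1.le (by omega)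
    _ = q := pow_one q
  have hlow := Etil_lower hq0 hq1 hy0 hyq
  have hEy : 0 < Etil q (q ^ (N+1)) := by
    have : q ^ (N+1) * Mconst q < 1 := by
      have h2 : q ^ (N+1) * (Mconst q + 1) < 1 := by
        rw [lt_div_iff₀ (by positivity)] at hN
        linarith
      nlinarith
    linarith
  rw [IE hq0 hq1 N]
  exact mul_pos (qpoch_pos hq0 hq1 N) hEy

/-- Representation of `[n]_q!` as `Σ_l γ_l λ_l^n` with `λ_l = q^l/(1-q)`. -/
lemma hasSum_rep_fact (n : ℕ) :
    HasSum (fun l : ℕ => (q ^ l / (qpoch q l * Atil q q)) * (q ^ l / (1 - q)) ^ n)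
      (qFactorial q n) := by
  have hA1 : (1:ℝ) ≤ Atil q q := Atil_ge_one hq0 hq1
  have hA0 : Atil q q ≠ 0 := by linarith
  have h1q : (0:ℝ) < 1 - q := by linarith
  have hx0 : (0:ℝ) ≤ q ^ (n+1) := pow_nonneg hq0 _
  have hx1 : q ^ (n+1) < 1 := pow_lt_one' hq0 hq1 (by omega)
  have hbase := (hasSum_Atil hq0 hq1 hx0 hx1).mul_right (1 / (Atil q q * (1 - q) ^ n))
  have heq : (fun l : ℕ => (q ^ (n+1)) ^ l / qpoch q l * (1 / (Atil q q * (1 - q) ^ n)))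
      = fun l : ℕ => (q ^ l / (qpoch q l * Atil q q)) * (q ^ l / (1 - q)) ^ n := by
    funext l
    have hp := (qpoch_pos hq0 hq1 l).ne'
    rw [div_pow, ← pow_mul, ← pow_mul]
    have : (n+1) * l = l * n + l := by ring
    rw [this, pow_add]
    field_simp
  rw [heq] at hbase
  have hval : Atil q (q ^ (n+1)) * (1 / (Atil q q * (1 - q) ^ n)) = qFactorial q n := by
    rw [IA hq0 hq1 n, qFactorial_eq hq1]
    field_simp
  rwa [hval] at hbase

/-- Representation of `1/[n]_q!` as `Σ_l γ'_l λ_l^n` with `λ_l = (1-q) q^l`. -/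
lemma hasSum_rep_inv_fact (n : ℕ) :
    HasSum (fun l : ℕ => ((-1)^l * q ^ l.choose 2 * q ^ l / (qpoch q l * Etil q q))
        * ((1 - q) * q ^ l) ^ n)
      ((qFactorial q n)⁻¹) := by
  have hE0 := (Etil_pos hq0 hq1).ne'
  have h1q : (0:ℝ) < 1 - q := by linarith
  have hx0 : (0:ℝ) ≤ q ^ (n+1) := pow_nonneg hq0 _
  have hx1 : q ^ (n+1) < 1 := pow_lt_one' hq0 hq1 (by omega)
  have hbase := (hasSum_Etil hq0 hq1 hx0 hx1).mul_right ((1 - q) ^ n / Etil q q)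
  have heq : (fun l : ℕ => eterm q (q ^ (n+1)) l * ((1 - q) ^ n / Etil q q))
      = fun l : ℕ => ((-1)^l * q ^ l.choose 2 * q ^ l / (qpoch q l * Etil q q))
        * ((1 - q) * q ^ l) ^ n := by
    funext l
    have hp := (qpoch_pos hq0 hq1 l).ne'
    rw [eterm, mul_pow, ← pow_mul, ← pow_mul]
    have : (n+1) * l = l * n + l := by ring
    rw [this, pow_add]
    field_simp
  rw [heq] at hbase
  have hval : Etil q (q ^ (n+1)) * ((1 - q) ^ n / Etil q q) = (qFactorial q n)⁻¹ := by
    have hIE := IE hq0 hq1 n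
    have hquot : Etil q (q ^ (n+1)) = Etil q q / qpoch q n := by
      rw [hIE]
      field_simp [(qpoch_pos hq0 hq1 n).ne']
    rw [hquot, qFactorial_eq hq1, inv_div]
    have hpn := (qpoch_pos hq0 hq1 n).ne'
    field_simp
  rwa [hval] at hbase

/-- summability of the γ weights, in abs value. -/
lemma gamma_fact_abs_summable :
    Summable (fun l : ℕ => |q ^ l / (qpoch q l * Atil q q)|) := by
  have hA1 : (1:ℝ) ≤ Atil q q := Atil_ge_one hq0 hq1
  apply Summable.of_nonneg_of_le (fun l => abs_nonneg _) _ (sumLem hq0 hq1 hq0 hq1)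
  intro l
  have hp := qpoch_pos hq0 hq1 l
  rw [abs_of_nonneg (by positivity)]
  rw [div_le_div_iff₀ (by positivity) hp]
  nlinarith [mul_nonneg (mul_nonneg (pow_nonneg hq0 l) hp.le) (sub_nonneg.mpr hA1)]

lemma gamma_inv_fact_abs_summable :
    Summable (fun l : ℕ => |(-1:ℝ)^l * q ^ l.choose 2 * q ^ l / (qpoch q l * Etil q q)|) := by
  have hE := Etil_pos hq0 hq1
  apply Summable.of_nonneg_of_le (fun l => abs_nonneg _) _
    ((sumLem hq0 hq1 hq0 hq1).mul_left (1 / Etil q q))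
  intro l
  have hp := qpoch_pos hq0 hq1 l
  have habs : |(-1:ℝ)^l * q ^ l.choose 2 * q ^ l / (qpoch q l * Etil q q)|
      = q ^ l.choose 2 * q ^ l / (qpoch q l * Etil q q) := by
    rw [abs_div, abs_of_pos (mul_pos hp hE), abs_mul, abs_mul, abs_pow, abs_neg, abs_one,
      one_pow, one_mul, abs_of_nonneg (pow_nonneg hq0 _), abs_of_nonneg (pow_nonneg hq0 _)]
  rw [habs]
  have hE0 := hE.ne'
  have h1 : q ^ l.choose 2 * q ^ l ≤ q ^ l := by
    nlinarith [pow_le_one₀ hq0 hq1.le (n := l.choose 2), pow_nonneg hq0 l]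
  calc q ^ l.choose 2 * q ^ l / (qpoch q l * Etil q q)
      ≤ q ^ l / (qpoch q l * Etil q q) :=
        div_le_div_of_nonneg_right h1 (mul_pos hp hE).le
  _ = 1 / Etil q q * (q ^ l / qpoch q l) := by rw [one_div_mul_eq_div, div_div]

end QAux

namespace Part1

variable {q : ℝ}

lemma qNat_pos (hq0 : 0 ≤ q) (n : ℕ) : 0 < qNat q (n + 1) := by
  have h0 : (1:ℝ) ≤ ∑ i ∈ Finset.range (n+1), q ^ i := by
    calc (1:ℝ) = q ^ 0 := by simp
    _ ≤ ∑ i ∈ Finset.range (n+1), q ^ i := by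
        apply Finset.single_le_sum (f := fun i => q ^ i) (fun i _ => pow_nonneg hq0 i)
        simp
  unfold qNat
  linarith

lemma qFactorial_pos' (hq0 : 0 ≤ q) (n : ℕ) : 0 < qFactorial q n := by
  induction n with
  | zero => norm_num [qFactorial]
  | succ n ih => exact mul_pos ih (qNat_pos hq0 n)

/-- `Zder` iterates commute with multiplying the `n`-th coefficient by a constant. -/
lemma zder_iter (c : ℕ → ℂ) (u : ℕ → ℂ → ℂ) (j : ℕ) :
    Zder^[j] (fun n z => c n * u n z) = fun n z => c n * (Zder^[j] u) n z := by
  induction j with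
  | zero => rfl
  | succ j ih =>
      rw [Function.iterate_succ_apply', ih, Function.iterate_succ_apply']
      funext n z
      show deriv (fun z => c n * (Zder^[j] u) n z) z = c n * deriv ((Zder^[j] u) n) z
      exact deriv_const_mul_field _

/-- `Tmom` for the constant moment sequence `1` is the shift. -/
lemma tmom_one_iter (u : ℕ → ℂ → ℂ) (i : ℕ) :
    (Tmom (fun _ => 1))^[i] u = fun n z => u (n + i) z := by
  induction i with
  | zero => rfl
  | succ i ih =>
      rw [Function.iterate_succ_apply', ih]
      funext n z
      show ((1 / 1 : ℝ) : ℂ) * u (n + 1 + i) z = u (n + (i+1)) z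
      norm_num
      ring_nf

/-- `Tmom` for `m = qFactorial q` on coefficients scaled by `1/[n]_q!`. -/
lemma tmom_fact_iter (hq0 : 0 ≤ q) (u : ℕ → ℂ → ℂ) (i : ℕ) :
    (Tmom (qFactorial q))^[i] (fun n z => ((qFactorial q n : ℝ) : ℂ)⁻¹ * u n z)
      = fun n z => ((qFactorial q n : ℝ) : ℂ)⁻¹ * u (n + i) z := by
  induction i with
  | zero => rfl
  | succ i ih =>
      rw [Function.iterate_succ_apply', ih]
      funext n z
      show ((qFactorial q (n+1) / qFactorial q n : ℝ) : ℂ) *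
          (((qFactorial q (n+1) : ℝ) : ℂ)⁻¹ * u (n + 1 + i) z)
        = ((qFactorial q n : ℝ) : ℂ)⁻¹ * u (n + (i+1)) z
      have h1 : (qFactorial q n : ℝ) ≠ 0 := (qFactorial_pos' hq0 n).ne'
      have h2 : (qFactorial q (n+1) : ℝ) ≠ 0 := (qFactorial_pos' hq0 (n+1)).ne'
      have h3 : ((qFactorial q n : ℝ) : ℂ) ≠ 0 := by exact_mod_cast h1
      have h4 : ((qFactorial q (n+1) : ℝ) : ℂ) ≠ 0 := by exact_mod_cast h2
      have hn : n + 1 + i = n + (i + 1) := by ring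
      rw [hn]
      push_cast
      field_simp

lemma papply_eq (hq0 : 0 ≤ q) (P : Polynomial (Polynomial ℂ)) (u : ℕ → ℂ → ℂ) (n : ℕ) (z : ℂ) :
    PApply (qFactorial q) P (fun n z => ((qFactorial q n : ℝ) : ℂ)⁻¹ * u n z) n z
      = ((qFactorial q n : ℝ) : ℂ)⁻¹ * PApply (fun _ => 1) P u n z := by
  unfold PApply
  rw [Finset.mul_sum]
  apply Finset.sum_congr rfl
  intro i _
  rw [Finset.mul_sum]
  apply Finset.sum_congr rfl
  intro j _
  have h1 : Zder^[j] (fun n z => ((qFactorial q n : ℝ) : ℂ)⁻¹ * u n z)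
      = fun n z => ((qFactorial q n : ℝ) : ℂ)⁻¹ * (Zder^[j] u) n z :=
    zder_iter (fun n => ((qFactorial q n : ℝ) : ℂ)⁻¹) u j
  rw [h1, tmom_fact_iter hq0 (Zder^[j] u) i, tmom_one_iter (Zder^[j] u) i]
  ring

theorem part1 (hq0 : 0 ≤ q)
    (P : Polynomial (Polynomial ℂ)) (p : ℕ) (R : ℝ) (φ : ℕ → ℂ → ℂ) (u : ℕ → ℂ → ℂ) :
    IsCauchySol (qFactorial q) P R p φ (fun n z => ((qFactorial q n : ℝ) : ℂ)⁻¹ * u n z)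
      ↔ IsCauchySol (fun _ => 1) P R p φ u := by
  have hfact0 : ∀ n, ((qFactorial q n : ℝ) : ℂ)⁻¹ ≠ 0 := by
    intro n
    apply inv_ne_zero
    exact_mod_cast (qFactorial_pos' hq0 n).ne'
  constructor
  · rintro ⟨h1, h2⟩
    constructor
    · intro n z hz
      have := h1 n z hz
      rw [papply_eq hq0 P u n z] at this
      exact (mul_eq_zero.mp this).resolve_left (hfact0 n)
    · intro j hj z hz
      have h3 := h2 j hj z hz
      rw [tmom_fact_iter hq0 u j] at h3
      have h4 : ((qFactorial q 0 : ℝ) : ℂ)⁻¹ * u (0 + j) z = φ j z := h3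
      rw [tmom_one_iter u j]
      show u (0 + j) z = φ j z
      have hq1 : ((qFactorial q 0 : ℝ) : ℂ)⁻¹ = 1 := by norm_num [qFactorial]
      rw [hq1, one_mul] at h4
      exact h4
  · rintro ⟨h1, h2⟩
    constructor
    · intro n z hz
      rw [papply_eq hq0 P u n z, h1 n z hz, mul_zero]
    · intro j hj z hz
      rw [tmom_fact_iter hq0 u j]
      show ((qFactorial q 0 : ℝ) : ℂ)⁻¹ * u (0 + j) z = φ j z
      have hq1 : ((qFactorial q 0 : ℝ) : ℂ)⁻¹ = 1 := by norm_num [qFactorial]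
      rw [hq1, one_mul]
      have h3 := h2 j hj z hz
      rw [tmom_one_iter u j] at h3
      exact h3

end Part1

lemma arg_le {ζ : ℂ} (h : ‖ζ - 1‖ ≤ 1/2) :
    |Complex.arg ζ| ≤ π * ‖ζ - 1‖ := by
  have hre : (1:ℝ)/2 ≤ ζ.re := by
    have h1 : |(ζ - 1).re| ≤ ‖ζ - 1‖ := Complex.abs_re_le_norm _
    have h2 : (ζ - 1).re = ζ.re - 1 := by simp
    rw [h2] at h1
    have := abs_le.mp h1
    linarith [this.1]
  have habs : (1:ℝ)/2 ≤ ‖ζ‖ := by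
    have h1 := norm_sub_le ζ (ζ - 1)
    rw [show ζ - (ζ - 1) = 1 by ring] at h1
    simp only [norm_one] at h1
    linarith
  have hπ := Real.pi_pos
  have harg : |Complex.arg ζ| < π / 2 :=
    Complex.abs_arg_lt_pi_div_two_iff.mpr (Or.inl (by linarith))
  have harg2 := abs_lt.mp harg
  have hsin_eq : Real.sin |Complex.arg ζ| = |Real.sin (Complex.arg ζ)| := by
    rcases le_or_gt 0 (Complex.arg ζ) with hc | hc
    · rw [abs_of_nonneg hc, abs_of_nonneg]
      exact Real.sin_nonneg_of_nonneg_of_le_pi hc (by linarith)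
    · rw [abs_of_neg hc, Real.sin_neg, abs_of_nonpos]
      apply Real.sin_nonpos_of_nonpos_of_neg_pi_le hc.le
      linarith
  have hjordan := Real.mul_le_sin (abs_nonneg (Complex.arg ζ)) harg.le
  rw [hsin_eq] at hjordan
  have hsin : |Real.sin (Complex.arg ζ)| ≤ 2 * ‖ζ - 1‖ := by
    rw [Complex.sin_arg, abs_div, abs_of_nonneg (norm_nonneg ζ)]
    have him : |ζ.im| ≤ ‖ζ - 1‖ := by
      have : ζ.im = (ζ - 1).im := by simp
      rw [this]
      exact Complex.abs_im_le_norm _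
    rw [div_le_iff₀ (by linarith)]
    nlinarith [mul_nonneg (by linarith : (0:ℝ) ≤ 2*‖ζ‖ - 1) (norm_nonneg (ζ-1))]
  have key := mul_le_mul_of_nonneg_left (hjordan.trans hsin) (by positivity : (0:ℝ) ≤ π/2)
  have e1 : π/2 * (2/π * |Complex.arg ζ|) = |Complex.arg ζ| := by field_simp
  have e2 : π/2 * (2*‖ζ-1‖) = π * ‖ζ-1‖ := by ring
  rw [e1, e2] at key
  exact key

lemma sector_mono {d α β : ℝ} (h : α ≤ β) : Sector d α ⊆ Sector d β := by
  rintro z ⟨hz, φ, hφ, hzeq⟩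
  exact ⟨hz, φ, lt_of_lt_of_le hφ (by linarith), hzeq⟩

lemma sector_smul {d α : ℝ} {lam : ℝ} (hl : 0 < lam) {z : ℂ} (hz : z ∈ Sector d α) :
    (lam : ℂ) * z ∈ Sector d α := by
  obtain ⟨hz0, φ, hφ, hzeq⟩ := hz
  refine ⟨mul_ne_zero (by exact_mod_cast hl.ne') hz0, φ, hφ, ?_⟩
  have habs : ‖(lam:ℂ) * z‖ = lam * ‖z‖ := by
    rw [norm_mul, Complex.norm_real, Real.norm_eq_abs, abs_of_pos hl]
  rw [habs]
  push_cast
  rw [mul_assoc]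
  rw [← hzeq]

lemma mem_discSector_smul {d α r r' : ℝ} {lam Λ : ℝ} (hl0 : 0 ≤ lam) (hlΛ : lam ≤ Λ)
    (hr' : 0 < r') (hΛr : Λ * r ≤ r') {z : ℂ} (hz : z ∈ DiscSector d α r) :
    (lam : ℂ) * z ∈ DiscSector d α r' := by
  rcases eq_or_lt_of_le hl0 with h0 | hpos
  · right
    simp only [Metric.mem_ball, dist_zero_right, ← h0]
    simpa using hr'
  rcases hz with hz | hz
  · exact Or.inl (sector_smul hpos hz)
  · right
    simp only [Metric.mem_ball, dist_zero_right] at hz ⊢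
    have hΛ0 : 0 < Λ := lt_of_lt_of_le hpos hlΛ
    have : ‖(lam:ℂ) * z‖ = lam * ‖z‖ := by
      rw [norm_mul, Complex.norm_real, Real.norm_eq_abs, abs_of_pos hpos]
    rw [this]
    calc lam * ‖z‖ ≤ Λ * ‖z‖ := by nlinarith [norm_nonneg z]
    _ < Λ * r := by nlinarith [norm_nonneg z]
    _ ≤ r' := hΛr

lemma sector_ball_subset {d α : ℝ} (hα : 0 < α) {z : ℂ} (hz : z ∈ Sector d (α/2)) :
    Metric.ball z (‖z‖ * min (1/2) (α/(8*π))) ⊆ Sector d (3*α/4) := by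
  obtain ⟨hz0, φ, hφ, hzeq⟩ := hz
  have hπ := Real.pi_pos
  have hzabs : 0 < ‖z‖ := norm_pos_iff.mpr hz0
  set c : ℝ := min (1/2) (α/(8*π)) with hc
  have hcpos : 0 < c := lt_min (by norm_num) (by positivity)
  have hchalf : c ≤ 1/2 := min_le_left _ _
  have hcα : c ≤ α/(8*π) := min_le_right _ _
  intro w hw
  rw [Metric.mem_ball, dist_eq_norm] at hw
  set ζ : ℂ := w / z with hζ
  have hζ1 : ‖ζ - 1‖ < c := by
    have : ζ - 1 = (w - z) / z := by rw [hζ, div_sub_one hz0]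
    rw [this, norm_div]
    rw [div_lt_iff₀ hzabs]
    calc ‖w - z‖ = ‖w - z‖ := rfl
    _ < ‖z‖ * c := hw
    _ = c * ‖z‖ := by ring
  have hζ1' : ‖ζ - 1‖ ≤ 1/2 := le_of_lt (lt_of_lt_of_le hζ1 hchalf)
  have hζ0 : ζ ≠ 0 := by
    intro h
    rw [h] at hζ1'
    simp at hζ1'
    norm_num at hζ1'
  have hw0 : w ≠ 0 := by
    intro h
    apply hζ0
    rw [hζ, h, zero_div]
  have harg : |Complex.arg ζ| ≤ π * ‖ζ - 1‖ := arg_le hζ1'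
  have hargc : |Complex.arg ζ| < α/8 := by
    calc |Complex.arg ζ| ≤ π * ‖ζ - 1‖ := harg
    _ < π * c := by nlinarith
    _ ≤ π * (α/(8*π)) := by nlinarith
    _ = α/8 := by field_simp
  refine ⟨hw0, φ + Complex.arg ζ, ?_, ?_⟩
  · have h1 : |φ - d| < α/4 := by
      have := hφ
      linarith [this]  -- hφ : |φ - d| < (α/2)/2
    calc |φ + Complex.arg ζ - d| ≤ |φ - d| + |Complex.arg ζ| := by
          have : φ + Complex.arg ζ - d = (φ - d) + Complex.arg ζ := by ring
          rw [this]
          exact abs_add_le _ _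
    _ < α/4 + α/8 := by linarith
    _ = 3*α/4/2 := by ring
  · have hzf : z = (‖z‖ : ℂ) * Complex.exp (φ * Complex.I) := hzeq
    have hζf : ζ = (‖ζ‖ : ℂ) * Complex.exp (Complex.arg ζ * Complex.I) :=
      (Complex.norm_mul_exp_arg_mul_I ζ).symm
    have habsw : ‖w‖ = ‖ζ‖ * ‖z‖ := by
      rw [hζ, norm_div]
      field_simp
    have hwzeq : w = ζ * z := by
      rw [hζ]
      field_simp
    rw [habsw]
    calc w = ζ * z := hwzeq
    _ = ((‖ζ‖ : ℂ) * Complex.exp (Complex.arg ζ * Complex.I)) *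
        ((‖z‖ : ℂ) * Complex.exp (φ * Complex.I)) := by rw [← hζf, ← hzf]
    _ = ((‖ζ‖ * ‖z‖ : ℝ) : ℂ) *
        Complex.exp ((φ + Complex.arg ζ : ℝ) * Complex.I) := by
        push_cast
        rw [add_mul, Complex.exp_add]
        ring

section Mult

variable [CompleteSpace E]

lemma abs_le_of_mem_ball {z w : ℂ} {ε : ℝ} (hw : w ∈ Metric.ball z ε) :
    ‖w‖ ≤ ‖z‖ + ε := by
  rw [Metric.mem_ball] at hw
  have h := dist_triangle w z 0
  have h1 : dist w (0:ℂ) = ‖w‖ := by rw [Complex.dist_eq, sub_zero]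
  have h2 : dist z (0:ℂ) = ‖z‖ := by rw [Complex.dist_eq, sub_zero]
  rw [h1, h2] at h
  linarith

set_option maxHeartbeats 1000000 in
theorem mult {k d : ℝ} (hk : 0 < k) {γ lam : ℕ → ℝ} {Λ : ℝ} (hΛ : 1 ≤ Λ)
    (hlam0 : ∀ l, 0 ≤ lam l) (hlamΛ : ∀ l, lam l ≤ Λ)
    (hγ : Summable (fun l => |γ l|)) {s : ℕ → ℝ}
    (hs : ∀ n, HasSum (fun l => γ l * lam l ^ n) (s n))
    {b : ℕ → E} (hb : ExtendsToSector k d b) :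
    ExtendsToSector k d (fun n => ((s n : ℝ) : ℂ) • b n) := by
  obtain ⟨α, r, hα0, hα2π, hr0, f, hfdiff, hfgrowth, ρ, hρ0, hρr, hρsum⟩ := hb
  have hΛ0 : (0:ℝ) < Λ := lt_of_lt_of_le one_pos hΛ
  have hπ := Real.pi_pos
  -- the new sum function
  set g : ℂ → E := fun t => ∑' l : ℕ, (γ l : ℂ) • f ((lam l : ℂ) * t) with hg
  -- basic norm identity
  have hnorm : ∀ (l : ℕ) (v : E), ‖(γ l : ℂ) • v‖ = |γ l| * ‖v‖ := by
    intro l v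
    rw [norm_smul, Complex.norm_real, Real.norm_eq_abs]
  have habs_mul : ∀ (lam' : ℝ) (t : ℂ), 0 ≤ lam' →
      ‖(lam' : ℂ) * t‖ = lam' * ‖t‖ := by
    intro lam' t h
    rw [norm_mul, Complex.norm_real, Real.norm_eq_abs, abs_of_nonneg h]
  refine ⟨α/2, r/(2*Λ), by linarith, by linarith, by positivity, g, ?_, ?_, ?_⟩
  · -- differentiability
    intro z hz
    apply DifferentiableAt.differentiableWithinAt
    -- find a suitable open ball around z
    have hV : ∃ ε : ℝ, 0 < ε ∧
        (Metric.ball z ε ⊆ Sector d (3*α/4) ∨ Metric.ball z ε ⊆ Metric.ball (0:ℂ) (3*r/(4*Λ))) := by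
      rcases hz with hzS | hzB
      · refine ⟨‖z‖ * min (1/2) (α/(8*π)), ?_, Or.inl (sector_ball_subset hα0 hzS)⟩
        have hz0 : z ≠ 0 := hzS.1
        have := norm_pos_iff.mpr hz0
        positivity
      · refine ⟨r/(4*Λ), by positivity, Or.inr ?_⟩
        intro w hw
        rw [Metric.mem_ball, dist_zero_right]
        rw [Metric.mem_ball] at hw
        rw [Metric.mem_ball, dist_zero_right] at hzB
        have h1 := abs_le_of_mem_ball hw
        have hzB' : ‖z‖ < r/(2*Λ) := hzB
        calc ‖w‖ = ‖w‖ := rfl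
        _ ≤ ‖z‖ + r/(4*Λ) := h1
        _ < r/(2*Λ) + r/(4*Λ) := by linarith
        _ ≤ 3*r/(4*Λ) := le_of_eq (by field_simp; ring)
    obtain ⟨ε, hε0, hVcase⟩ := hV
    -- uniform bound constant
    have hbound : ∃ C : ℝ, 0 ≤ C ∧ ∀ (l : ℕ) (w : ℂ), w ∈ Metric.ball z ε →
        ‖f ((lam l : ℂ) * w)‖ ≤ C := by
      rcases hVcase with hVS | hVB
      · obtain ⟨A, B, hA, hB, hAB⟩ := hfgrowth (3*α/4) ⟨by linarith, by linarith⟩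
          (r/2) ⟨by linarith, by linarith⟩
        refine ⟨A * Real.exp (B * (Λ * (‖z‖ + ε)) ^ k), by positivity, ?_⟩
        intro l w hw
        have hmem : (lam l : ℂ) * w ∈ DiscSector d (3*α/4) (r/2) := by
          rcases eq_or_lt_of_le (hlam0 l) with h0 | hpos
          · right
            rw [Metric.mem_ball, dist_zero_right, ← h0]
            simpa using by positivity
          · exact Or.inl (sector_smul hpos (hVS hw))
        have h1 := hAB _ hmem
        refine h1.trans ?_
        have hwabs : ‖w‖ ≤ ‖z‖ + ε := abs_le_of_mem_ball hw
        have habs2 : ‖(lam l : ℂ) * w‖ ≤ Λ * (‖z‖ + ε) := by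
          rw [habs_mul _ _ (hlam0 l)]
          have := hlamΛ l
          nlinarith [norm_nonneg w, hlam0 l]
        gcongr
      · obtain ⟨A, B, hA, hB, hAB⟩ := hfgrowth (α/2) ⟨by linarith, by linarith⟩
          (3*r/4) ⟨by linarith, by linarith⟩
        refine ⟨A * Real.exp (B * (Λ * (‖z‖ + ε)) ^ k), by positivity, ?_⟩
        intro l w hw
        have hwB := hVB hw
        rw [Metric.mem_ball, dist_zero_right] at hwB
        have hmem : (lam l : ℂ) * w ∈ DiscSector d (α/2) (3*r/4) := by
          right
          rw [Metric.mem_ball, dist_zero_right]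
          have : ‖(lam l : ℂ) * w‖ = lam l * ‖w‖ := by
            rw [norm_mul, Complex.norm_real, Real.norm_eq_abs, abs_of_nonneg (hlam0 l)]
          rw [this]
          calc lam l * ‖w‖ ≤ Λ * ‖w‖ := by nlinarith [norm_nonneg w, hlam0 l, hlamΛ l]
          _ < Λ * (3*r/(4*Λ)) := by nlinarith [norm_nonneg w]
          _ = 3*r/4 := by field_simp
        have h1 := hAB _ hmem
        refine h1.trans ?_
        have hwabs : ‖w‖ ≤ ‖z‖ + ε := abs_le_of_mem_ball hw
        have habs2 : ‖(lam l : ℂ) * w‖ ≤ Λ * (‖z‖ + ε) := by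
          rw [habs_mul _ _ (hlam0 l)]
          have := hlamΛ l
          nlinarith [norm_nonneg w, hlam0 l]
        gcongr
    obtain ⟨C, hC0, hC⟩ := hbound
    -- each term is differentiable on the ball
    have hterms : ∀ l : ℕ, DifferentiableOn ℂ (fun w => (γ l : ℂ) • f ((lam l : ℂ) * w))
        (Metric.ball z ε) := by
      intro l
      apply DifferentiableOn.const_smul
      apply DifferentiableOn.comp hfdiff
      · exact (differentiable_id.const_mul _).differentiableOn
      · intro w hw
        rcases eq_or_lt_of_le (hlam0 l) with h0 | hpos
        · right
          rw [Metric.mem_ball, dist_zero_right, ← h0]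
          simpa using hr0
        · rcases hVcase with hVS | hVB
          · exact Or.inl (sector_mono (by linarith) (sector_smul hpos (hVS hw)))
          · right
            have hwB := hVB hw
            rw [Metric.mem_ball, dist_zero_right] at hwB ⊢
            have : ‖(lam l : ℂ) * w‖ = lam l * ‖w‖ := by
              rw [norm_mul, Complex.norm_real, Real.norm_eq_abs, abs_of_nonneg (hlam0 l)]
            rw [this]
            calc lam l * ‖w‖ ≤ Λ * ‖w‖ := by nlinarith [norm_nonneg w, hlam0 l, hlamΛ l]
            _ < Λ * (3*r/(4*Λ)) := by nlinarith [norm_nonneg w]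
            _ = 3*r/4 := by field_simp
            _ ≤ r := by linarith
    have hle : ∀ (l : ℕ) (w : ℂ), w ∈ Metric.ball z ε →
        ‖(γ l : ℂ) • f ((lam l : ℂ) * w)‖ ≤ |γ l| * C := by
      intro l w hw
      rw [hnorm l]
      exact mul_le_mul_of_nonneg_left (hC l w hw) (abs_nonneg _)
    have hdiff := Complex.differentiableOn_tsum_of_summable_norm (hγ.mul_right C) hterms
      Metric.isOpen_ball hle
    exact hdiff.differentiableAt (Metric.isOpen_ball.mem_nhds (Metric.mem_ball_self hε0))
  · -- exponential growth
    intro α' hα' r' hr'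
    have hΛr'pos : 0 < Λ * r' := mul_pos hΛ0 hr'.1
    have hΛr' : Λ * r' < r := by
      have h1 : Λ * r' < Λ * (r/(2*Λ)) := by
        have := hr'.2
        nlinarith
      have h2 : Λ * (r/(2*Λ)) = r/2 := by field_simp
      rw [h2] at h1
      linarith
    obtain ⟨A, B, hA, hB, hAB⟩ := hfgrowth α' ⟨hα'.1, by linarith [hα'.2]⟩ (Λ * r')
      ⟨hΛr'pos, hΛr'⟩
    have hΛk : (0:ℝ) < Λ ^ k := Real.rpow_pos_of_pos hΛ0 k
    have htsnn0 : 0 ≤ ∑' l, |γ l| := tsum_nonneg (fun l => abs_nonneg _)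
    refine ⟨A * (∑' l, |γ l|) + A, B * Λ ^ k, by nlinarith, by positivity, ?_⟩
    intro x hx
    have hterm : ∀ l, ‖(γ l : ℂ) • f ((lam l : ℂ) * x)‖
        ≤ |γ l| * (A * Real.exp (B * Λ ^ k * ‖x‖ ^ k)) := by
      intro l
      rw [hnorm l]
      apply mul_le_mul_of_nonneg_left _ (abs_nonneg _)
      have hmem : (lam l : ℂ) * x ∈ DiscSector d α' (Λ * r') :=
        mem_discSector_smul (hlam0 l) (hlamΛ l) hΛr'pos (le_refl _) hx
      refine (hAB _ hmem).trans ?_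
      have habs2 : ‖(lam l : ℂ) * x‖ ≤ Λ * ‖x‖ := by
        rw [habs_mul _ _ (hlam0 l)]
        nlinarith [norm_nonneg x, hlamΛ l, hlam0 l]
      have hpow : ‖(lam l : ℂ) * x‖ ^ k ≤ (Λ * ‖x‖) ^ k :=
        Real.rpow_le_rpow (norm_nonneg _) habs2 hk.le
      have heq : (Λ * ‖x‖) ^ k = Λ ^ k * ‖x‖ ^ k :=
        Real.mul_rpow hΛ0.le (norm_nonneg x)
      have hexp : B * ‖(lam l : ℂ) * x‖ ^ k ≤ B * Λ ^ k * ‖x‖ ^ k := by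
        rw [mul_assoc, ← heq]
        exact mul_le_mul_of_nonneg_left hpow hB.le
      exact mul_le_mul_of_nonneg_left (Real.exp_le_exp.mpr hexp) hA.le
    have hsum : Summable (fun l => ‖(γ l : ℂ) • f ((lam l : ℂ) * x)‖) :=
      Summable.of_nonneg_of_le (fun l => norm_nonneg _) hterm (hγ.mul_right _)
    have htsnn : 0 ≤ ∑' l, |γ l| := tsum_nonneg (fun l => abs_nonneg _)
    have hexp0 := Real.exp_pos (B * Λ ^ k * ‖x‖ ^ k)
    calc ‖g x‖ ≤ ∑' l, ‖(γ l : ℂ) • f ((lam l : ℂ) * x)‖ := norm_tsum_le_tsum_norm hsum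
    _ ≤ ∑' l, |γ l| * (A * Real.exp (B * Λ ^ k * ‖x‖ ^ k)) :=
        Summable.tsum_le_tsum hterm hsum (hγ.mul_right _)
    _ = (∑' l, |γ l|) * (A * Real.exp (B * Λ ^ k * ‖x‖ ^ k)) :=
        hγ.tsum_mul_right _
    _ ≤ (A * (∑' l, |γ l|) + A) * Real.exp (B * Λ ^ k * ‖x‖ ^ k) := by nlinarith
  · -- the sum near the origin
    refine ⟨ρ/(2*Λ), by positivity, by gcongr, ?_⟩
    intro t ht
    rw [Metric.mem_ball, dist_zero_right] at ht
    set T := ‖t‖ with hT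
    have htabs : T < ρ/(2*Λ) := ht
    have hT0 : 0 ≤ T := norm_nonneg t
    have hΛT0 : 0 ≤ Λ * T := mul_nonneg hΛ0.le hT0
    have hΛT : Λ * T < ρ/2 := by
      calc Λ * T < Λ * (ρ/(2*Λ)) := by nlinarith
      _ = ρ/2 := by field_simp
    set t₀ : ℝ := (Λ*T + ρ)/2 with ht₀
    have ht₀pos : 0 < t₀ := by rw [ht₀]; linarith
    have hΛTt₀ : Λ*T < t₀ := by rw [ht₀]; linarith
    have ht₀ρ : t₀ < ρ := by rw [ht₀]; linarith
    have hsum_t₀ := hρsum (t₀ : ℂ) (by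
      rw [Metric.mem_ball, dist_zero_right, Complex.norm_real, Real.norm_eq_abs,
        abs_of_pos ht₀pos]
      exact ht₀ρ)
    have htend : Filter.Tendsto (fun n => ‖(t₀:ℂ)^n • b n‖) Filter.atTop (nhds 0) := by
      simpa using (hsum_t₀.summable.tendsto_atTop_zero).norm
    obtain ⟨M, hM⟩ := htend.bddAbove_range
    have hMn : ∀ n, t₀^n * ‖b n‖ ≤ M := by
      intro n
      have h1 := hM (Set.mem_range_self n)
      rwa [norm_smul, norm_pow, Complex.norm_real, Real.norm_eq_abs,
        abs_of_pos ht₀pos] at h1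
    have hratio : Λ*T/t₀ < 1 := by rw [div_lt_one ht₀pos]; exact hΛTt₀
    have hratio0 : 0 ≤ Λ*T/t₀ := div_nonneg hΛT0 ht₀pos.le
    have hgeo : Summable (fun n : ℕ => (Λ*T)^n * ‖b n‖) := by
      apply Summable.of_nonneg_of_le
        (fun n => mul_nonneg (pow_nonneg hΛT0 n) (norm_nonneg _)) _
        ((summable_geometric_of_lt_one hratio0 hratio).mul_right M)
      intro n
      have he : (Λ*T)^n = (Λ*T/t₀)^n * t₀^n := by
        rw [div_pow]
        field_simp
      rw [he, mul_assoc]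
      exact mul_le_mul_of_nonneg_left (hMn n) (pow_nonneg hratio0 n)
    set F : ℕ × ℕ → E := fun p => (γ p.1 : ℂ) • (((lam p.1 : ℂ) * t)^p.2 • b p.2) with hFdef
    have hFnormval : ∀ p : ℕ × ℕ, ‖F p‖ = |γ p.1| * ((lam p.1 * T)^p.2 * ‖b p.2‖) := by
      intro p
      rw [hFdef]
      simp only []
      rw [hnorm, norm_smul, norm_pow, norm_mul, Complex.norm_real, Real.norm_eq_abs,
        abs_of_nonneg (hlam0 p.1)]
    have hFnorm : Summable (fun p => ‖F p‖) := by
      apply Summable.of_nonneg_of_le (fun p => norm_nonneg _) _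
        (hγ.mul_of_nonneg hgeo (fun l => abs_nonneg _)
          (fun n => mul_nonneg (pow_nonneg hΛT0 n) (norm_nonneg _)))
      intro p
      rw [hFnormval p]
      apply mul_le_mul_of_nonneg_left _ (abs_nonneg _)
      apply mul_le_mul_of_nonneg_right _ (norm_nonneg _)
      apply pow_le_pow_left₀ (mul_nonneg (hlam0 p.1) hT0)
      nlinarith [hlamΛ p.1, hlam0 p.1, hT0]
    have hFsum : Summable F := hFnorm.of_norm
    have hmemρ : ∀ l, (lam l : ℂ) * t ∈ Metric.ball (0:ℂ) ρ := by
      intro l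
      rw [Metric.mem_ball, dist_zero_right, norm_mul, Complex.norm_real, Real.norm_eq_abs,
        abs_of_nonneg (hlam0 l)]
      rw [← hT]
      calc lam l * T ≤ Λ * T := by nlinarith [hlamΛ l, hlam0 l]
      _ < ρ := by linarith
    have hfiber : ∀ l, HasSum (fun n => F (l, n)) ((γ l : ℂ) • f ((lam l : ℂ) * t)) :=
      fun l => (hρsum _ (hmemρ l)).const_smul _
    have htot : HasSum (fun l => (γ l : ℂ) • f ((lam l : ℂ) * t)) (∑' p, F p) :=
      hFsum.hasSum.prod_fiberwise hfiber
    have hgt : g t = ∑' p, F p := htot.tsum_eq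
    have hswap : HasSum (fun p : ℕ × ℕ => F (p.2, p.1)) (∑' p, F p) :=
      ((Equiv.prodComm ℕ ℕ).hasSum_iff).mpr hFsum.hasSum
    have hfiber2 : ∀ n, HasSum (fun l => F (l, n)) (t^n • (((s n : ℝ) : ℂ) • b n)) := by
      intro n
      have hsc : HasSum (fun l => ((γ l * lam l ^ n : ℝ) : ℂ)) (((s n : ℝ) : ℂ)) :=
        Complex.hasSum_ofReal.mpr (hs n)
      have h2 := hsc.smul_const (t^n • b n)
      have hterm_eq : (fun l => ((γ l * lam l ^ n : ℝ) : ℂ) • (t^n • b n))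
          = fun l => F (l, n) := by
        funext l
        rw [hFdef]
        simp only [smul_smul]
        congr 1
        push_cast
        ring
      have hval_eq : (((s n : ℝ) : ℂ)) • (t^n • b n) = t^n • (((s n : ℝ) : ℂ) • b n) :=
        smul_comm _ _ _
      rw [hterm_eq, hval_eq] at h2
      exact h2
    have hfinal := hswap.prod_fiberwise hfiber2
    rw [← hgt] at hfinal
    exact hfinal

end Mult

instance holDiscComplete (ρ : ℝ) : CompleteSpace (HolDisc ρ) := by
  have hclosed : IsClosed ((HolDisc ρ : Set C(Metric.closedBall (0 : ℂ) ρ, ℂ))) := by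
    apply IsSeqClosed.isClosed
    intro fs f hfs hlim
    classical
    choose G hGdiff hGeq using hfs
    set f' : ℂ → ℂ := fun z =>
      if hz : z ∈ Metric.closedBall (0:ℂ) ρ then f ⟨z, hz⟩ else 0 with hf'
    have huc : TendstoUniformly (fun n => (fs n : Metric.closedBall (0:ℂ) ρ → ℂ)) f
        Filter.atTop := ContinuousMap.tendsto_iff_tendstoUniformly.mp hlim
    have hucOn : TendstoUniformlyOn (fun n z => G n z) f' Filter.atTop
        (Metric.ball (0:ℂ) ρ) := by
      rw [Metric.tendstoUniformlyOn_iff]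
      intro ε hε
      have h1 := Metric.tendstoUniformly_iff.mp huc ε hε
      filter_upwards [h1] with n hn
      intro z hz
      have hz' : z ∈ Metric.closedBall (0:ℂ) ρ := Metric.ball_subset_closedBall hz
      have e1 : f' z = f ⟨z, hz'⟩ := by rw [hf']; simp [hz']
      have e2 : G n z = fs n ⟨z, hz'⟩ := hGeq n ⟨z, hz'⟩ hz
      rw [e1, e2]
      exact hn ⟨z, hz'⟩
    refine ⟨f', ?_, ?_⟩
    · exact hucOn.tendstoLocallyUniformlyOn.differentiableOn
        (Filter.Eventually.of_forall (fun n => hGdiff n)) Metric.isOpen_ball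
    · intro z hz
      rw [hf']
      simp only [Subtype.coe_prop, dif_pos]
  exact hclosed.completeSpace_coe

end Aux

/-- for `q ∈ [0,1)`, (1) `û(t,z) = Σ (uₙ(z)/[n]_q!)tⁿ` solves the Cauchy
problem `P(D_{q,t},∂_z)u = 0`, `D^j_{q,t}u(0,z) = φ_j(z)` iff `v̂(t,z) = Σ uₙ(z)tⁿ` solves
`P(∂_{𝟏,t},∂_z)v = 0` with the same data (note `D_{q,t} = ∂_{m,t}` for `m = ([n]_q!)`, since
`m(n+1)/m(n) = [n+1]_q`); and (2) for every `k > 0` and `d`, `û` is `k`-summable in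
direction `d` iff `v̂` is. -/
theorem stmt19 (q : ℝ) (hq0 : 0 ≤ q) (hq1 : q < 1)
    (P : Polynomial (Polynomial ℂ)) (p : ℕ) (hp : 1 ≤ p) (hdeg : P.natDegree = p)
    (R : ℝ) (hR : 0 < R)
    (φ : ℕ → ℂ → ℂ) (hφ : ∀ j < p, DifferentiableOn ℂ (φ j) (Metric.ball 0 R))
    (u : ℕ → ℂ → ℂ) (hu : ∀ n, DifferentiableOn ℂ (u n) (Metric.ball 0 R)) :
    (IsCauchySol (qFactorial q) P R p φ (fun n z => ((qFactorial q n : ℝ) : ℂ)⁻¹ * u n z)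
      ↔ IsCauchySol (fun _ => 1) P R p φ u) ∧
    (∀ k d : ℝ, 0 < k →
      (KSummableO k d R (fun n z => ((qFactorial q n : ℝ) : ℂ)⁻¹ * u n z)
        ↔ KSummableO k d R u)) := by
  have h1q : (0:ℝ) < 1 - q := by linarith
  refine ⟨Part1.part1 hq0 P p R φ u, ?_⟩
  intro k d hk
  -- representation data for multiplying by `[n]_q!`
  have hΛ1ge : (1:ℝ) ≤ max (1/(1-q)) 1 := le_max_right _ _
  have hlam10 : ∀ l : ℕ, 0 ≤ q ^ l / (1 - q) :=
    fun l => div_nonneg (pow_nonneg hq0 l) h1q.le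
  have hlam1Λ : ∀ l : ℕ, q ^ l / (1 - q) ≤ max (1/(1-q)) 1 := by
    intro l
    refine le_trans ?_ (le_max_left _ _)
    apply div_le_div_of_nonneg_right (pow_le_one₀ hq0 hq1.le) h1q.le
  have hγ1s := QAux.gamma_fact_abs_summable hq0 hq1
  have hrep1 := QAux.hasSum_rep_fact hq0 hq1
  -- representation data for multiplying by `1/[n]_q!`
  have hlam20 : ∀ l : ℕ, 0 ≤ (1 - q) * q ^ l :=
    fun l => mul_nonneg h1q.le (pow_nonneg hq0 l)
  have hlam2Λ : ∀ l : ℕ, (1 - q) * q ^ l ≤ (1:ℝ) := by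
    intro l
    nlinarith [pow_le_one₀ hq0 hq1.le (n := l), pow_nonneg hq0 l]
  have hγ2s := QAux.gamma_inv_fact_abs_summable hq0 hq1
  have hrep2 := QAux.hasSum_rep_inv_fact hq0 hq1
  constructor
  · rintro ⟨ρ, hρ0, hsub, c, hc, hK⟩
    refine ⟨ρ, hρ0, hsub, fun n => ((qFactorial q n : ℝ) : ℂ) • c n, ?_, ?_⟩
    · intro n z
      have hfne : ((qFactorial q n : ℝ) : ℂ) ≠ 0 := by
        exact_mod_cast (Part1.qFactorial_pos' hq0 n).ne'
      rw [Submodule.coe_smul, ContinuousMap.smul_apply, smul_eq_mul, hc n z,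
        ← mul_assoc, mul_inv_cancel₀ hfne, one_mul]
    · have hK' : ExtendsToSector k d
          (fun n => ((Real.Gamma (1 + (n : ℝ) / k) : ℂ))⁻¹ • c n) := hK
      have hmult := mult hk hΛ1ge hlam10 hlam1Λ hγ1s hrep1 hK'
      show ExtendsToSector k d
        (fun n => ((Real.Gamma (1 + (n : ℝ) / k) : ℂ))⁻¹ •
          (((qFactorial q n : ℝ) : ℂ) • c n))
      have heq : (fun n : ℕ => ((Real.Gamma (1 + (n : ℝ) / k) : ℂ))⁻¹ •
            (((qFactorial q n : ℝ) : ℂ) • c n))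
          = fun n : ℕ => ((qFactorial q n : ℝ) : ℂ) •
            (((Real.Gamma (1 + (n : ℝ) / k) : ℂ))⁻¹ • c n) :=
        funext fun n => smul_comm _ _ _
      rw [heq]
      exact hmult
  · rintro ⟨ρ, hρ0, hsub, c, hc, hK⟩
    refine ⟨ρ, hρ0, hsub, fun n => (((qFactorial q n)⁻¹ : ℝ) : ℂ) • c n, ?_, ?_⟩
    · intro n z
      rw [Submodule.coe_smul, ContinuousMap.smul_apply, smul_eq_mul, hc n z]
      push_cast
      ring
    · have hK' : ExtendsToSector k d
          (fun n => ((Real.Gamma (1 + (n : ℝ) / k) : ℂ))⁻¹ • c n) := hK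
      have hmult := mult hk (le_refl (1:ℝ)) hlam20 hlam2Λ hγ2s hrep2 hK'
      show ExtendsToSector k d
        (fun n => ((Real.Gamma (1 + (n : ℝ) / k) : ℂ))⁻¹ •
          ((((qFactorial q n)⁻¹ : ℝ) : ℂ) • c n))
      have heq : (fun n : ℕ => ((Real.Gamma (1 + (n : ℝ) / k) : ℂ))⁻¹ •
            ((((qFactorial q n)⁻¹ : ℝ) : ℂ) • c n))
          = fun n : ℕ => (((qFactorial q n)⁻¹ : ℝ) : ℂ) •
            (((Real.Gamma (1 + (n : ℝ) / k) : ℂ))⁻¹ • c n) :=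
        funext fun n => smul_comm _ _ _
      rw [heq]
      exact hmult
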